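/- arXiv:0907.5434 — 2 statements merged into one kernel-verified Lean document; each statement's English description precedes it below -/
import Mathlib

section
/- Fix a prime p, a finite field F_q, and t ∈ F_q. The probability that F = F_1 F_2^2 ⋯ F_{p-1}^{p-1} vanishes at t, when (F_1, ..., F_{p-1}) is chosen uniformly among (p-1)-tuples of nonzero residues modulo (X-t)^2 with at most one F_i divisible by (X-t), equals (p-1)/(q+p-1); and for each fixed a ∈ F_q^*, the probability that F(t) = a equals q/((q-1)(q+p-1)). -/
/-!
A residue modulo `(X - t)^2` is `b + c (X - t)` for a pair `(b, c)`, where `b` is its value at `t`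
and `X - t` divides it iff `b = 0`. Hence `F(t) = ∏ bᵢ^i`, and admissible tuples are tuples of
nonzero pairs with at most one vanishing value `bᵢ`.

`F(t) = 0` exactly when one `bᵢ` vanishes, which happens for
`(p - 1) (q - 1) ((q - 1) q)^(p - 2)` tuples. For `a ≠ 0` all `bᵢ` are units and `b₁` is
determined by the others, so `F(t) = a` for `(q - 1)^(p - 2) q^(p - 1)` tuples, independently of
`a`. Summing over the values of `F(t)` gives the total `q^(p - 2) (q - 1)^(p - 1) (q + p - 1)`.
-/

open Polynomial

theorem Nat.card_eq_sum_card_fiber {α β : Type*} [Fintype β] (P : α → Prop)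
    [Finite {x // P x}] (f : α → β) :
    Nat.card {x // P x} = ∑ b, Nat.card {x // P x ∧ f x = b} := by
  rw [← Nat.card_congr (Equiv.sigmaFiberEquiv fun x : {x // P x} => f x), Nat.card_sigma]
  exact Finset.sum_congr rfl fun b _ =>
    Nat.card_congr (Equiv.subtypeSubtypeEquivSubtypeInter P (f · = b))

theorem Nat.card_eq_card_fiber_zero_add {α M : Type*} [Zero M] [Fintype M]
    (P : α → Prop) [hP : Finite {x // P x}] (f : α → M) {A : ℕ}
    (hA : ∀ a ≠ 0, Nat.card {x // P x ∧ f x = a} = A) :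
    Nat.card {x // P x} = Nat.card {x // P x ∧ f x = 0} + (Nat.card M - 1) * A := by
  classical
  rw [Nat.card_eq_sum_card_fiber P f, ← Finset.univ.add_sum_erase _ (Finset.mem_univ 0),
    Finset.sum_congr rfl fun a ha => hA a (Finset.ne_of_mem_erase ha), Finset.sum_const,
    Finset.card_erase_of_mem (Finset.mem_univ 0), Finset.card_univ,
    Nat.card_eq_fintype_card (α := M), smul_eq_mul]

section ExactlyOne

variable {α : Type*} (P Z : α → Prop) (n : ℕ)

theorem card_tuples_exactly_at (i : Fin n) :
    Nat.card {w : Fin n → α // (∀ j, P (w j)) ∧ ∀ j, Z (w j) ↔ j = i} =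
      Nat.card {x // P x ∧ Z x} * Nat.card {x // P x ∧ ¬Z x} ^ (n - 1) := by
  classical
  let e := (Equiv.piSplitAt i fun _ => α).subtypeEquiv
    (p := fun w => (∀ j, P (w j)) ∧ ∀ j, Z (w j) ↔ j = i)
    (q := fun y => (P y.1 ∧ Z y.1) ∧ ∀ j : {j // j ≠ i}, P (y.2 j) ∧ ¬Z (y.2 j))
    fun w => by
      simp only [Equiv.piSplitAt_apply, Subtype.forall]
      constructor
      · grind
      · intro h
        refine ⟨fun j => ?_, fun j => ?_⟩ <;> by_cases hj : j = i <;> grind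
  rw [Nat.card_congr (e.trans ((Equiv.subtypeProdEquivProd (p := fun x => P x ∧ Z x)).trans
    (Equiv.prodCongrRight fun _ =>
      Equiv.subtypePiEquivPi (p := fun (_ : {j // j ≠ i}) x => P x ∧ ¬Z x)))),
    Nat.card_prod, Nat.card_pi]
  simp

theorem card_tuples_exactly_one [Finite α] :
    Nat.card {w : Fin n → α //
        (∀ i, P (w i)) ∧ (∀ i j, i ≠ j → ¬(Z (w i) ∧ Z (w j))) ∧ ∃ i, Z (w i)} =
      n * (Nat.card {x // P x ∧ Z x} * Nat.card {x // P x ∧ ¬Z x} ^ (n - 1)) := by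
  let e : (Σ i : Fin n, {w : Fin n → α // (∀ j, P (w j)) ∧ ∀ j, Z (w j) ↔ j = i}) ≃
      {w : Fin n → α //
        (∀ i, P (w i)) ∧ (∀ i j, i ≠ j → ¬(Z (w i) ∧ Z (w j))) ∧ ∃ i, Z (w i)} :=
    Equiv.ofBijective (fun x => ⟨x.2, x.2.2.1, fun i j hij hZ => hij <|
        ((x.2.2.2 i).1 hZ.1).trans ((x.2.2.2 j).1 hZ.2).symm, x.1, (x.2.2.2 x.1).2 rfl⟩) <| by
      constructor
      · rintro ⟨i, w, hw⟩ ⟨i', w', hw'⟩ h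
        obtain rfl : w = w' := congrArg Subtype.val h
        obtain rfl : i = i' := (hw'.2 i).1 ((hw.2 i).2 rfl)
        rfl
      · rintro ⟨w, hP, hpair, i, hi⟩
        refine ⟨⟨i, w, hP, fun j => ⟨fun hj => ?_, fun hj => hj ▸ hi⟩⟩, rfl⟩
        by_contra hji
        exact hpair j i hji ⟨hj, hi⟩
  rw [← Nat.card_congr e, Nat.card_sigma]
  simp only [card_tuples_exactly_at, Finset.sum_const, Finset.card_univ, Fintype.card_fin,
    smul_eq_mul]

end ExactlyOne

theorem card_fin_cons_mul_eq {G : Type*} [Group G] {m : ℕ} (f : (Fin m → G) → G) (a : G) :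
    Nat.card {b : Fin (m + 1) → G // b 0 * f (Fin.tail b) = a} = Nat.card G ^ m := by
  let e : {b : Fin (m + 1) → G // b 0 * f (Fin.tail b) = a} ≃ (Fin m → G) :=
    { toFun b := Fin.tail b.1
      invFun c := ⟨Fin.cons (a * (f c)⁻¹) c, by simp⟩
      left_inv b := Subtype.ext <| by
        conv_rhs => rw [← Fin.cons_self_tail b.1, eq_mul_inv_of_mul_eq b.2]
      right_inv c := Fin.tail_cons _ _ }
  rw [Nat.card_congr e, Nat.card_fun, Nat.card_fin]

section GroupWithZero

variable {G₀ : Type*} [GroupWithZero G₀]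

theorem Nat.card_ne_zero_subtype : Nat.card {a : G₀ // a ≠ 0} = Nat.card G₀ - 1 := by
  rw [← Nat.card_units, Nat.card_congr unitsEquivNeZero]

theorem card_pairs_ne_zero_fst_eq_zero :
    Nat.card {x : G₀ × G₀ // x ≠ 0 ∧ x.1 = 0} = Nat.card G₀ - 1 := by
  let e : {x : G₀ × G₀ // x ≠ 0 ∧ x.1 = 0} ≃ {b : G₀ // b ≠ 0} :=
    { toFun x := ⟨x.1.2, fun h => x.2.1 (Prod.ext x.2.2 h)⟩
      invFun b := ⟨(0, b), fun h => b.2 (congrArg Prod.snd h), rfl⟩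
      left_inv x := Subtype.ext (Prod.ext x.2.2.symm rfl)
      right_inv _ := rfl }
  rw [Nat.card_congr e, Nat.card_ne_zero_subtype]

theorem card_pairs_ne_zero_fst_ne_zero :
    Nat.card {x : G₀ × G₀ // x ≠ 0 ∧ ¬x.1 = 0} = (Nat.card G₀ - 1) * Nat.card G₀ := by
  have e : {x : G₀ × G₀ // x ≠ 0 ∧ ¬x.1 = 0} ≃ {x : G₀ × G₀ // x.1 ≠ 0} :=
    Equiv.subtypeEquivRight fun _ => and_iff_right_of_imp fun h hx => h (congrArg Prod.fst hx)
  rw [Nat.card_congr (e.trans (Equiv.prodSubtypeFstEquivSubtypeProd (p := (· ≠ 0)))),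
    Nat.card_prod, Nat.card_ne_zero_subtype]

end GroupWithZero

section CommGroupWithZero

variable {G₀ : Type*} [CommGroupWithZero G₀]

theorem card_weighted_prod_eq_units {n : ℕ} {a : G₀} (ha : a ≠ 0) :
    Nat.card {b : Fin n → G₀ // ∏ i, b i ^ ((i : ℕ) + 1) = a} =
      Nat.card {u : Fin n → G₀ˣ // ∏ i, u i ^ ((i : ℕ) + 1) = Units.mk0 a ha} := by
  have hb (b : {b : Fin n → G₀ // ∏ i, b i ^ ((i : ℕ) + 1) = a}) (i : Fin n) :
      b.1 i ≠ 0 :=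
    fun h => ha <| b.2 ▸ Finset.prod_eq_zero (Finset.mem_univ i) (by simp [h])
  refine Nat.card_congr
    { toFun b := ⟨fun i => Units.mk0 (b.1 i) (hb b i), Units.ext <| by simpa using b.2⟩
      invFun u := ⟨fun i => u.1 i, by simpa using congrArg Units.val u.2⟩
      left_inv b := rfl
      right_inv u := Subtype.ext <| funext fun i => Units.ext rfl }

theorem card_weighted_prod_eq {m : ℕ} {a : G₀} (ha : a ≠ 0) :
    Nat.card {b : Fin (m + 1) → G₀ // ∏ i, b i ^ ((i : ℕ) + 1) = a} =
      (Nat.card G₀ - 1) ^ m := by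
  rw [card_weighted_prod_eq_units ha, ← Nat.card_units]
  simp only [Fin.prod_univ_succ, Fin.val_zero, zero_add, pow_one, Fin.val_succ]
  exact card_fin_cons_mul_eq (fun c => ∏ i : Fin m, c i ^ ((i : ℕ) + 1 + 1)) _

theorem card_pairs_weighted_prod_eq {m : ℕ} {a : G₀} (ha : a ≠ 0) :
    Nat.card {w : Fin (m + 1) → G₀ × G₀ //
        ((∀ i, w i ≠ 0) ∧ ∀ i j, i ≠ j → ¬((w i).1 = 0 ∧ (w j).1 = 0)) ∧
        ∏ i, (w i).1 ^ ((i : ℕ) + 1) = a} =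
      (Nat.card G₀ - 1) ^ m * Nat.card G₀ ^ (m + 1) := by
  have hfst (w : Fin (m + 1) → G₀ × G₀) (hw : ∏ i, (w i).1 ^ ((i : ℕ) + 1) = a) (i) :
      (w i).1 ≠ 0 :=
    fun h => ha <| hw ▸ Finset.prod_eq_zero (Finset.mem_univ i) (by simp [h])
  have e : {w : Fin (m + 1) → G₀ × G₀ //
        ((∀ i, w i ≠ 0) ∧ ∀ i j, i ≠ j → ¬((w i).1 = 0 ∧ (w j).1 = 0)) ∧
        ∏ i, (w i).1 ^ ((i : ℕ) + 1) = a} ≃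
      {s : (Fin (m + 1) → G₀) × (Fin (m + 1) → G₀) //
        ∏ i, s.1 i ^ ((i : ℕ) + 1) = a} :=
    (Equiv.subtypeEquivRight fun w => and_iff_right_of_imp fun hw =>
        ⟨fun i h => hfst w hw i (congrArg Prod.fst h), fun i _ _ h => hfst w hw i h.1⟩).trans
      ((Equiv.arrowProdEquivProdArrow _ (fun _ => G₀) fun _ => G₀).subtypeEquiv
        fun _ => Iff.rfl)
  rw [Nat.card_congr (e.trans (Equiv.prodSubtypeFstEquivSubtypeProd
    (p := fun b : Fin (m + 1) → G₀ => ∏ i, b i ^ ((i : ℕ) + 1) = a))), Nat.card_prod,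
    card_weighted_prod_eq ha, Nat.card_fun, Nat.card_fin]

theorem card_pairs_weighted_prod_eq_zero [Finite G₀] (n : ℕ) :
    Nat.card {w : Fin n → G₀ × G₀ //
        ((∀ i, w i ≠ 0) ∧ ∀ i j, i ≠ j → ¬((w i).1 = 0 ∧ (w j).1 = 0)) ∧
        ∏ i, (w i).1 ^ ((i : ℕ) + 1) = 0} =
      n * ((Nat.card G₀ - 1) * ((Nat.card G₀ - 1) * Nat.card G₀) ^ (n - 1)) := by
  rw [← card_pairs_ne_zero_fst_ne_zero, ← card_pairs_ne_zero_fst_eq_zero,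
    ← card_tuples_exactly_one]
  exact Nat.card_congr <| Equiv.subtypeEquivRight fun w => by
    simp [Finset.prod_eq_zero_iff, and_assoc]

end CommGroupWithZero

namespace Polynomial

variable {R : Type*} [CommRing R]

theorem eq_C_mul_X_add_C_eval_sub {f : R[X]} (hf : f.degree < 2) (t : R) :
    f = C (f.coeff 1) * X + C (f.eval t - f.coeff 1 * t) := by
  have hf' := eq_X_add_C_of_degree_le_one (Order.le_of_lt_succ hf)
  have heval : f.eval t = f.coeff 1 * t + f.coeff 0 := by
    conv_lhs => rw [hf']
    simp
  rwa [heval, add_sub_cancel_left]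

noncomputable def degreeLtTwoEquiv (t : R) : {f : R[X] // f.degree < 2} ≃ R × R where
  toFun f := (f.1.eval t, f.1.coeff 1)
  invFun x := ⟨C x.2 * X + C (x.1 - x.2 * t), degree_linear_lt⟩
  left_inv f := Subtype.ext (eq_C_mul_X_add_C_eval_sub f.2 t).symm
  right_inv x := by simp

theorem degreeLtTwoEquiv_apply (t : R) (f : {f : R[X] // f.degree < 2}) :
    degreeLtTwoEquiv t f = (f.1.eval t, f.1.coeff 1) :=
  rfl

theorem degreeLtTwoEquiv_eq_zero_iff (t : R) (f : {f : R[X] // f.degree < 2}) :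
    degreeLtTwoEquiv t f = 0 ↔ f.1 = 0 := by
  rw [← Equiv.eq_symm_apply, Subtype.ext_iff]
  simp [degreeLtTwoEquiv]

noncomputable def degreeLtTwoPiEquiv (t : R) (n : ℕ) :
    {v : Fin n → R[X] // ∀ i, (v i).degree < 2} ≃ (Fin n → R × R) :=
  (Equiv.subtypePiEquivPi (p := fun _ (f : R[X]) => f.degree < 2)).trans
    (Equiv.piCongrRight fun _ => degreeLtTwoEquiv t)

theorem finite_of_forall_degree_lt_two [Finite R] {n : ℕ} {P : (Fin n → R[X]) → Prop}
    (hP : ∀ v, P v → ∀ i, (v i).degree < 2) : Finite {v // P v} :=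
  have := Finite.of_equiv _ (degreeLtTwoPiEquiv (0 : R) n).symm
  Finite.of_injective _ (Subtype.impEmbedding _ _ hP).injective

theorem card_residue_tuples (t : R) (n : ℕ) (S : R → Prop) :
    Nat.card {v : Fin n → R[X] //
        ((∀ i, v i ≠ 0 ∧ (v i).degree < 2) ∧
          ∀ i j, i ≠ j → ¬((X - C t ∣ v i) ∧ (X - C t ∣ v j))) ∧
        S ((∏ i : Fin n, v i ^ ((i : ℕ) + 1)).eval t)} =
      Nat.card {w : Fin n → R × R //
        ((∀ i, w i ≠ 0) ∧ ∀ i j, i ≠ j → ¬((w i).1 = 0 ∧ (w j).1 = 0)) ∧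
        S (∏ i : Fin n, (w i).1 ^ ((i : ℕ) + 1))} := by
  refine Nat.card_congr <| (Equiv.subtypeEquivRight fun v => ?_).trans <|
    (Equiv.subtypeSubtypeEquivSubtypeInter _ fun v => ((∀ i, v i ≠ 0) ∧
      ∀ i j, i ≠ j → ¬((X - C t ∣ v i) ∧ (X - C t ∣ v j))) ∧
        S ((∏ i : Fin n, v i ^ ((i : ℕ) + 1)).eval t)).symm.trans <|
    (degreeLtTwoPiEquiv t n).subtypeEquiv fun v => ?_
  · simp only [forall_and]
    tauto
  · have hE : ∀ i, degreeLtTwoPiEquiv t n v i = degreeLtTwoEquiv t ⟨v.1 i, v.2 i⟩ :=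
      fun _ => rfl
    simp only [hE, ne_eq, degreeLtTwoEquiv_eq_zero_iff]
    simp only [degreeLtTwoEquiv_apply, dvd_iff_isRoot, IsRoot.def, eval_prod, eval_pow]

end Polynomial

/-- Choosing a `(p-1)`-tuple of nonzero residues modulo `(X-t)^2` (represented
as polynomials of degree `< 2`) with at most one coordinate divisible by `X - t`
uniformly at random, the probability that `F = F_1 F_2^2 ⋯ F_{p-1}^{p-1}`
vanishes at `t` is `(p-1)/(q+p-1)`, and for each fixed `a ≠ 0` the probability
that `F(t) = a` is `q/((q-1)(q+p-1))`. -/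
theorem tuple_value_prob_mod_sq (F : Type*) [Field F] [Fintype F] (q p : ℕ)
    (hq : Fintype.card F = q) (hp : p.Prime) (t : F) :
    ((Nat.card {v : Fin (p - 1) → Polynomial F //
        ((∀ i, v i ≠ 0 ∧ (v i).degree < 2) ∧
          ∀ i j, i ≠ j → ¬((X - C t ∣ v i) ∧ (X - C t ∣ v j))) ∧
        (∏ i : Fin (p - 1), (v i) ^ ((i : ℕ) + 1)).eval t = 0} : ℝ) /
      (Nat.card {v : Fin (p - 1) → Polynomial F //
        (∀ i, v i ≠ 0 ∧ (v i).degree < 2) ∧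
          ∀ i j, i ≠ j → ¬((X - C t ∣ v i) ∧ (X - C t ∣ v j))} : ℝ) =
      ((p : ℝ) - 1) / ((q : ℝ) + (p : ℝ) - 1)) ∧
    ∀ a : F, a ≠ 0 →
      ((Nat.card {v : Fin (p - 1) → Polynomial F //
          ((∀ i, v i ≠ 0 ∧ (v i).degree < 2) ∧
            ∀ i j, i ≠ j → ¬((X - C t ∣ v i) ∧ (X - C t ∣ v j))) ∧
          (∏ i : Fin (p - 1), (v i) ^ ((i : ℕ) + 1)).eval t = a} : ℝ) /
        (Nat.card {v : Fin (p - 1) → Polynomial F //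
          (∀ i, v i ≠ 0 ∧ (v i).degree < 2) ∧
            ∀ i j, i ≠ j → ¬((X - C t ∣ v i) ∧ (X - C t ∣ v j))} : ℝ) =
        (q : ℝ) / (((q : ℝ) - 1) * ((q : ℝ) + (p : ℝ) - 1))) := by
  obtain ⟨m, rfl⟩ : ∃ m, p = m + 2 := ⟨p - 2, by have := hp.two_le; omega⟩
  have hq1 : 1 < q := hq ▸ Fintype.one_lt_card
  obtain ⟨r, rfl⟩ : ∃ r, q = r + 1 := ⟨q - 1, by omega⟩
  rw [← Nat.card_eq_fintype_card] at hq
  rw [show m + 2 - 1 = m + 1 from rfl]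
  have hA (a : F) (ha : a ≠ 0) := (card_residue_tuples t (m + 1) (· = a)).trans
    (card_pairs_weighted_prod_eq (m := m) ha)
  have hZ := (card_residue_tuples t (m + 1) (· = 0)).trans
    (card_pairs_weighted_prod_eq_zero (G₀ := F) (m + 1))
  simp only [hq, Nat.add_sub_cancel, mul_pow] at hA hZ
  rw [Nat.card_eq_card_fiber_zero_add _ (hP := finite_of_forall_degree_lt_two
    fun v hv i => (hv.1 i).2) _ hA, hZ, hq, Nat.add_sub_cancel]
  rw [show (m + 1) * (r * (r ^ m * (r + 1) ^ m)) + r * (r ^ m * (r + 1) ^ (m + 1)) =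
    r ^ (m + 1) * (r + 1) ^ m * (r + m + 2) by ring]
  have hr : (0 : ℝ) < r := by norm_cast; omega
  refine ⟨?_, fun a ha => ?_⟩
  · push_cast
    rw [div_eq_div_iff (by positivity) (by linarith)]
    ring
  · rw [hA a ha]
    push_cast
    rw [div_eq_div_iff (by positivity) (by nlinarith)]
    ring
end

section
/- Let x_1, ..., x_ℓ be distinct elements of F_q (ℓ ≤ q) and let U ∈ F_q[X] with U(x_i) ≠ 0 for all i. Then ∑_{D monic, (D,U)=1, D(x_i)≠0 ∀i} μ(D) q^{-2 deg D} = (1 - q^{-1}) (1 - q^{-2})^{-ℓ} ∏_{P | U}(1 - q^{-2 deg P})^{-1}, where the product runs over distinct monic irreducible divisors P of U. -/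
open scoped Classical

noncomputable def polyMoebius' {F : Type*} [Field F] (D : Polynomial F) : ℤ :=
  if Squarefree D then (-1) ^ (UniqueFactorizationMonoid.factors D).card else 0

/-!
For a finite set `T` of monic irreducibles put `S_T(u) = ∑ μ(D) u ^ deg D` over the monic `D`
divisible by no `P ∈ T`. There are `q ^ n` monic polynomials of degree `n` and
`∑_{E ∣ D} μ(E) = [D = 1]`, so the degree-wise sums of `μ` convolved with `(q ^ n)` give `[n = 0]`;
hence `S_∅(u) = 1 - q u`. Splitting off the `D` divisible by `P`, which are `P E` with `P ∤ E`
when `μ(D) ≠ 0`, gives `S_T(u) = (1 - u ^ deg P) S_{T ∪ {P}}(u)`, so that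
`S_T(u) ∏_{P ∈ T} (1 - u ^ deg P) = 1 - q u`. The theorem is the case `u = q⁻²`, with `T` the
prime factors of `U` together with the `X - xᵢ`.
-/

open Polynomial UniqueFactorizationMonoid
open Finset.HasAntidiagonal (antidiagonal mem_antidiagonal)

section Arithmetic

variable {F : Type*} [Field F]

lemma polyMoebius'_of_squarefree {D : F[X]} (hD : Squarefree D) :
    polyMoebius' D = (-1) ^ (primeFactors D).card := by
  rw [polyMoebius', if_pos hD, ← Finset.card_val,
    primeFactors_val_eq_normalizedFactors hD.isRadical, normalizedFactors, Multiset.card_map]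

lemma polyMoebius'_of_not_squarefree {D : F[X]} (hD : ¬ Squarefree D) : polyMoebius' D = 0 :=
  if_neg hD

lemma polyMoebius'_one : polyMoebius' (1 : F[X]) = 1 := by
  simp [polyMoebius'_of_squarefree squarefree_one]

lemma polyMoebius'_mul {A B : F[X]} (h : IsRelPrime A B) :
    polyMoebius' (A * B) = polyMoebius' A * polyMoebius' B := by
  by_cases hAB : Squarefree (A * B)
  · obtain ⟨-, hsA, hsB⟩ := squarefree_mul_iff.1 hAB
    rw [polyMoebius'_of_squarefree hAB, polyMoebius'_of_squarefree hsA,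
      polyMoebius'_of_squarefree hsB, primeFactors_mul_eq_disjUnion h, Finset.card_disjUnion,
      pow_add]
  · rw [polyMoebius'_of_not_squarefree hAB]
    by_cases hsA : Squarefree A
    · rw [polyMoebius'_of_not_squarefree fun hsB => hAB (squarefree_mul_iff.2 ⟨h, hsA, hsB⟩),
        mul_zero]
    · rw [polyMoebius'_of_not_squarefree hsA, zero_mul]

lemma polyMoebius'_of_irreducible {P : F[X]} (hP : Irreducible P) : polyMoebius' P = -1 := by
  rw [polyMoebius'_of_squarefree hP.squarefree, primeFactors,
    normalizedFactors_irreducible hP]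
  simp

lemma abs_polyMoebius'_le_one (D : F[X]) : |(polyMoebius' D : ℝ)| ≤ 1 := by
  by_cases hD : Squarefree D
  · simp [polyMoebius'_of_squarefree hD]
  · simp [polyMoebius'_of_not_squarefree hD]

lemma mem_primeFactors_iff {D P : F[X]} (hD : D ≠ 0) :
    P ∈ primeFactors D ↔ P.Monic ∧ Irreducible P ∧ P ∣ D := by
  rw [mem_primeFactors, mem_normalizedFactors_iff' hD]
  refine ⟨fun ⟨hP, hn, hPD⟩ => ⟨hn ▸ monic_normalize hP.ne_zero, hP, hPD⟩,
    fun ⟨hm, hP, hPD⟩ => ⟨hP, hm.normalize_eq_self, hPD⟩⟩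

lemma primeFactors_finset_prod {S : Finset F[X]} (hS : ∀ P ∈ S, P.Monic ∧ Irreducible P) :
    primeFactors (∏ P ∈ S, P) = S := by
  rw [primeFactors, Finset.prod_eq_multiset_prod, Multiset.map_id',
    normalizedFactors_prod_eq _ fun P hP => (hS P hP).2,
    Multiset.map_congr rfl fun P hP => (hS P hP).1.normalize_eq_self, Multiset.map_id']
  convert S.val_toFinset

lemma Polynomial.Monic.eq_radical {E : F[X]} (hE : E.Monic) (hsq : Squarefree E) :
    E = radical E := by
  refine eq_of_monic_of_associated hE ?_ (radical_associated hsq.isRadical hE.ne_zero).symm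
  exact monic_prod_of_monic _ _ fun P hP => ((mem_primeFactors_iff hE.ne_zero).1 hP).1

lemma isCoprime_iff_forall_primeFactors_not_dvd {D U : F[X]} (hU : U ≠ 0) :
    IsCoprime D U ↔ ∀ P ∈ primeFactors U, ¬ P ∣ D := by
  refine ⟨fun h P hP hPD => ?_, fun h => isCoprime_of_irreducible_dvd (fun h0 => hU h0.2) ?_⟩
  · obtain ⟨-, hPi, hPU⟩ := (mem_primeFactors_iff hU).1 hP
    exact hPi.not_isUnit (h.isUnit_of_dvd' hPD hPU)
  · intro z hz hzD hzU
    have hassoc := normalize_associated z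
    refine h (normalize z) ((mem_primeFactors_iff hU).2 ⟨monic_normalize hz.ne_zero,
      hassoc.symm.irreducible hz, hassoc.dvd.trans hzU⟩) (hassoc.dvd.trans hzD)

end Arithmetic

section Counting

variable {F : Type*} [Field F] [Fintype F]

variable (F) in
noncomputable def monicOfDegreeEquiv (n : ℕ) :
    {D : F[X] // D.Monic ∧ D.natDegree = n} ≃ (Fin n → F) :=
  (monicEquivDegreeLT n).trans (degreeLTEquiv F n).toEquiv

variable (F) in
noncomputable def monicsOfDegree (n : ℕ) : Finset F[X] :=
  Finset.univ.map <|
    (monicOfDegreeEquiv F n).symm.toEmbedding.trans (Function.Embedding.subtype _)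

@[simp]
lemma mem_monicsOfDegree {n : ℕ} {D : F[X]} :
    D ∈ monicsOfDegree F n ↔ D.Monic ∧ D.natDegree = n := by
  simp only [monicsOfDegree, Finset.mem_map, Finset.mem_univ, true_and,
    Function.Embedding.trans_apply, Equiv.coe_toEmbedding, Function.Embedding.coe_subtype]
  refine ⟨?_, fun h =>
    ⟨_, congrArg Subtype.val ((monicOfDegreeEquiv F n).symm_apply_apply ⟨D, h⟩)⟩⟩
  rintro ⟨c, rfl⟩
  exact ((monicOfDegreeEquiv F n).symm c).2

lemma card_monicsOfDegree (n : ℕ) : (monicsOfDegree F n).card = Fintype.card F ^ n := by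
  simp [monicsOfDegree]

lemma monicsOfDegree_zero : monicsOfDegree F 0 = {1} := by
  ext D
  simp only [mem_monicsOfDegree, Finset.mem_singleton]
  exact ⟨fun ⟨hm, hd⟩ => hm.natDegree_eq_zero.1 hd, by rintro rfl; simp⟩

lemma injective_sigma_monicsOfDegree :
    Function.Injective fun p : Σ n, monicsOfDegree F n => (p.2 : F[X]) := by
  rintro ⟨n, D, hD⟩ ⟨m, E, hE⟩ (rfl : D = E)
  obtain rfl : n = m := (mem_monicsOfDegree.1 hD).2.symm.trans (mem_monicsOfDegree.1 hE).2
  rfl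

lemma mem_range_sigma_monicsOfDegree {D : F[X]} (hD : D.Monic) :
    D ∈ Set.range fun p : Σ n, monicsOfDegree F n => (p.2 : F[X]) :=
  ⟨⟨D.natDegree, D, mem_monicsOfDegree.2 ⟨hD, rfl⟩⟩, rfl⟩

lemma summable_of_abs_le_monic {f : F[X] → ℝ} {r : ℝ} (hr : 0 ≤ r)
    (hqr : Fintype.card F * r < 1) (hf : ∀ D, |f D| ≤ if D.Monic then r ^ D.natDegree else 0) :
    Summable f := by
  set w : F[X] → ℝ := fun D => if D.Monic then r ^ D.natDegree else 0
  suffices hw : Summable w from .of_norm_bounded hw hf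
  have hw_supp : ∀ D ∉ Set.range fun p : Σ n, monicsOfDegree F n => (p.2 : F[X]), w D = 0 :=
    fun D hD => if_neg fun hm => hD (mem_range_sigma_monicsOfDegree hm)
  have hw_nonneg : ∀ D, 0 ≤ w D := fun D => by
    simp only [w]
    split_ifs <;> positivity
  rw [← injective_sigma_monicsOfDegree.summable_iff hw_supp,
    summable_sigma_of_nonneg (f := w ∘ _) fun _ => hw_nonneg _]
  refine ⟨fun n => (hasSum_fintype _).summable, ?_⟩
  have hslice : ∀ n, ∑' D : monicsOfDegree F n, w D = (Fintype.card F * r) ^ n := by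
    intro n
    calc ∑' D : monicsOfDegree F n, w D = ∑ D ∈ monicsOfDegree F n, r ^ n := by
          rw [Finset.tsum_subtype (monicsOfDegree F n) w]
          refine Finset.sum_congr rfl fun D hD => ?_
          rw [mem_monicsOfDegree] at hD
          simp [w, hD.1, hD.2]
      _ = (Fintype.card F * r) ^ n := by
          rw [Finset.sum_const, card_monicsOfDegree, nsmul_eq_mul, mul_pow, Nat.cast_pow]
  simp only [Function.comp_apply, hslice]
  exact summable_geometric_of_lt_one (by positivity) hqr

lemma tsum_eq_tsum_sum_monicsOfDegree {f : F[X] → ℝ} (hf : Summable f)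
    (hsupp : ∀ D, ¬ D.Monic → f D = 0) :
    ∑' D, f D = ∑' n, ∑ D ∈ monicsOfDegree F n, f D := by
  have hrange : Function.support f ⊆ Set.range fun p : Σ n, monicsOfDegree F n => (p.2 : F[X]) :=
    fun D hD => mem_range_sigma_monicsOfDegree (not_not.1 fun hm => hD (hsupp D hm))
  have hsigma : Summable fun p : Σ n, monicsOfDegree F n => f p.2 :=
    (injective_sigma_monicsOfDegree.summable_iff
      fun D hD => Function.notMem_support.1 fun h => hD (hrange h)).2 hf
  rw [← injective_sigma_monicsOfDegree.tsum_eq hrange,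
    hsigma.tsum_sigma' fun n => (hasSum_fintype _).summable]
  exact tsum_congr fun n => Finset.tsum_subtype (monicsOfDegree F n) f

variable (F) in
noncomputable def monicPairs (n : ℕ) : Finset (F[X] × F[X]) :=
  (antidiagonal n).biUnion fun ij => monicsOfDegree F ij.1 ×ˢ monicsOfDegree F ij.2

lemma mem_monicPairs {n : ℕ} {x : F[X] × F[X]} :
    x ∈ monicPairs F n ↔ x.1.Monic ∧ x.2.Monic ∧ x.1.natDegree + x.2.natDegree = n := by
  simp only [monicPairs, Finset.mem_biUnion, mem_antidiagonal,
    Finset.mem_product, mem_monicsOfDegree]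
  constructor
  · rintro ⟨⟨i, j⟩, hij, ⟨h1, rfl⟩, h2, rfl⟩
    exact ⟨h1, h2, hij⟩
  · rintro ⟨h1, h2, h⟩
    exact ⟨(x.1.natDegree, x.2.natDegree), h, ⟨h1, rfl⟩, h2, rfl⟩

lemma sum_polyMoebius'_of_mul_eq {D : F[X]} (hD : D.Monic) :
    ∑ x ∈ monicPairs F D.natDegree with x.1 * x.2 = D, polyMoebius' x.1 =
      if D = 1 then 1 else 0 := by
  have hmem : ∀ {x : F[X] × F[X]},
      x ∈ {x ∈ monicPairs F D.natDegree | x.1 * x.2 = D} ↔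
        x.1.Monic ∧ x.2.Monic ∧ x.1 * x.2 = D := by
    intro x
    rw [Finset.mem_filter, mem_monicPairs]
    refine ⟨fun ⟨⟨h1, h2, _⟩, h⟩ => ⟨h1, h2, h⟩, fun ⟨h1, h2, h⟩ => ⟨⟨h1, h2, ?_⟩, h⟩⟩
    rw [← h, natDegree_mul h1.ne_zero h2.ne_zero]
  have hsq : ∀ {E : F[X]}, polyMoebius' E ≠ 0 → Squarefree E :=
    fun h => not_not.1 fun hE => h (polyMoebius'_of_not_squarefree hE)
  have hD1 : primeFactors D = ∅ ↔ D = 1 := by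
    rw [primeFactors_eq_empty_iff hD.ne_zero]
    exact ⟨hD.eq_one_of_isUnit, fun h => h ▸ isUnit_one⟩
  have hpowerset : (if D = 1 then 1 else 0 : ℤ) =
      ∑ S ∈ (primeFactors D).powerset, (-1) ^ S.card := by
    rw [Finset.sum_powerset_neg_one_pow_card]
    simp only [hD1]
  rw [hpowerset]
  -- `E ↦ primeFactors E` matches the squarefree monic divisors of `D` with the subsets of
  -- `primeFactors D`; the inverse is `S ↦ ∏ P ∈ S, P`.
  refine Finset.sum_bij_ne_zero (fun x _ _ => primeFactors x.1) ?_ ?_ ?_ ?_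
  · intro x hx _
    obtain ⟨h1, -, h⟩ := hmem.1 hx
    rw [Finset.mem_powerset]
    intro P hP
    rw [mem_primeFactors_iff h1.ne_zero] at hP
    exact (mem_primeFactors_iff hD.ne_zero).2 ⟨hP.1, hP.2.1, h ▸ hP.2.2.mul_right _⟩
  · intro x hx hx0 y hy hy0 hxy
    obtain ⟨hx1, -, hx⟩ := hmem.1 hx
    obtain ⟨hy1, -, hy⟩ := hmem.1 hy
    have h1 : x.1 = y.1 := by
      rw [hx1.eq_radical (hsq hx0), hy1.eq_radical (hsq hy0),
        radical_eq_iff_primeFactors_eq.2 hxy]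
    have h2 : x.2 = y.2 := mul_left_cancel₀ hx1.ne_zero (by rw [hx, h1, hy])
    exact Prod.ext h1 h2
  · intro S hS _
    rw [Finset.mem_powerset] at hS
    have hSirr : ∀ P ∈ S, P.Monic ∧ Irreducible P := fun P hP =>
      ((mem_primeFactors_iff hD.ne_zero).1 (hS hP)).imp_right And.left
    have hSm : (∏ P ∈ S, P).Monic := monic_prod_of_monic _ _ fun P hP => (hSirr P hP).1
    obtain ⟨G, hG⟩ : (∏ P ∈ S, P) ∣ D :=
      (Finset.prod_dvd_prod_of_subset S _ id hS).trans radical_dvd_self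
    have hx : (∏ P ∈ S, P, G) ∈ {x ∈ monicPairs F D.natDegree | x.1 * x.2 = D} :=
      hmem.2 ⟨hSm, hSm.of_mul_monic_left (hG ▸ hD), hG.symm⟩
    have hSsq : Squarefree (∏ P ∈ S, P) := by
      rw [← primeFactors_finset_prod hSirr] at hSm ⊢
      exact squarefree_radical
    exact ⟨_, hx, by simp [polyMoebius'_of_squarefree hSsq], primeFactors_finset_prod hSirr⟩
  · intro x _ hx0
    exact polyMoebius'_of_squarefree (hsq hx0)

lemma sum_antidiagonal_sum_polyMoebius'_mul_card (n : ℕ) :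
    ∑ ij ∈ antidiagonal n,
        (∑ E ∈ monicsOfDegree F ij.1, polyMoebius' E) * (Fintype.card F : ℤ) ^ ij.2 =
      if n = 0 then 1 else 0 := by
  have hpairs : ∀ ij : ℕ × ℕ,
      (∑ E ∈ monicsOfDegree F ij.1, polyMoebius' E) * (Fintype.card F : ℤ) ^ ij.2 =
        ∑ x ∈ monicsOfDegree F ij.1 ×ˢ monicsOfDegree F ij.2, polyMoebius' x.1 := by
    intro ij
    rw [Finset.sum_product, Finset.sum_mul]
    refine Finset.sum_congr rfl fun E _ => ?_
    simp only [Finset.sum_const, card_monicsOfDegree, nsmul_eq_mul]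
    push_cast
    ring
  have hdisj : (antidiagonal n : Set (ℕ × ℕ)).PairwiseDisjoint
      fun ij => monicsOfDegree F ij.1 ×ˢ monicsOfDegree F ij.2 := by
    intro ij _ kl _ hne
    refine Finset.disjoint_left.2 fun x hij hkl => hne ?_
    simp only [Finset.mem_product, mem_monicsOfDegree] at hij hkl
    exact Prod.ext (hij.1.2.symm.trans hkl.1.2) (hij.2.2.symm.trans hkl.2.2)
  have hmaps : ∀ x ∈ monicPairs F n, x.1 * x.2 ∈ monicsOfDegree F n := by
    intro x hx
    obtain ⟨h1, h2, hdeg⟩ := mem_monicPairs.1 hx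
    exact mem_monicsOfDegree.2 ⟨h1.mul h2, by rw [natDegree_mul h1.ne_zero h2.ne_zero, hdeg]⟩
  rw [Finset.sum_congr rfl fun ij _ => hpairs ij, ← Finset.sum_biUnion hdisj, ← monicPairs,
    ← Finset.sum_fiberwise_of_maps_to hmaps]
  calc ∑ D ∈ monicsOfDegree F n, ∑ x ∈ monicPairs F n with x.1 * x.2 = D, polyMoebius' x.1
      = ∑ D ∈ monicsOfDegree F n, if D = 1 then 1 else 0 := by
        refine Finset.sum_congr rfl fun D hD => ?_
        obtain ⟨hm, rfl⟩ := mem_monicsOfDegree.1 hD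
        exact sum_polyMoebius'_of_mul_eq hm
    _ = if n = 0 then 1 else 0 := by
        rcases n with _ | n
        · simp [monicsOfDegree_zero]
        · refine Finset.sum_eq_zero fun D hD => if_neg ?_
          rintro rfl
          simp at hD

lemma sum_polyMoebius'_monicsOfDegree (n : ℕ) :
    ∑ E ∈ monicsOfDegree F n, polyMoebius' E =
      if n = 0 then 1 else if n = 1 then -(Fintype.card F : ℤ) else 0 := by
  rcases n with _ | n
  · simp [monicsOfDegree_zero, polyMoebius'_one]
  · have h := sum_antidiagonal_sum_polyMoebius'_mul_card (F := F) (n + 1)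
    rw [Finset.Nat.sum_antidiagonal_succ', if_neg n.succ_ne_zero] at h
    simp only [pow_succ, ← mul_assoc, ← Finset.sum_mul,
      sum_antidiagonal_sum_polyMoebius'_mul_card, pow_zero, mul_one] at h
    rw [if_neg n.succ_ne_zero, eq_neg_of_add_eq_zero_left h]
    rcases n with _ | n <;> simp

end Counting

section EulerFactors

variable {F : Type*} [Field F]

noncomputable def moebiusTerm (T : Finset F[X]) (u : ℝ) (D : F[X]) : ℝ :=
  if D.Monic ∧ ∀ P ∈ T, ¬ P ∣ D then polyMoebius' D * u ^ D.natDegree else 0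

lemma abs_moebiusTerm_le (T : Finset F[X]) (u : ℝ) (D : F[X]) :
    |moebiusTerm T u D| ≤ if D.Monic then |u| ^ D.natDegree else 0 := by
  unfold moebiusTerm
  by_cases h : D.Monic ∧ ∀ P ∈ T, ¬ P ∣ D
  · rw [if_pos h, if_pos h.1, abs_mul, abs_pow]
    exact mul_le_of_le_one_left (by positivity) (abs_polyMoebius'_le_one D)
  · rw [if_neg h, abs_zero]
    split_ifs <;> positivity

variable {T : Finset F[X]} {P : F[X]}

lemma tsum_subtype_eq_tsum_moebiusTerm {p : F[X] → Prop}
    (hp : ∀ D, p D ↔ D.Monic ∧ ∀ P ∈ T, ¬ P ∣ D) (u : ℝ) :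
    ∑' D : {D // p D}, (polyMoebius' D.1 : ℝ) * u ^ D.1.natDegree =
      ∑' D, moebiusTerm T u D := by
  refine (tsum_subtype {D | p D} fun D => (polyMoebius' D : ℝ) * u ^ D.natDegree).trans
    (tsum_congr fun D => ?_)
  simp only [Set.indicator_apply, Set.mem_ofPred_eq, moebiusTerm, hp]

lemma moebiusTerm_mul_left (hT : ∀ Q ∈ T, Q.Monic ∧ Irreducible Q) (hPm : P.Monic)
    (hPi : Irreducible P) (hPT : P ∉ T) (u : ℝ) (E : F[X]) :
    moebiusTerm T u (P * E) = -u ^ P.natDegree * moebiusTerm (insert P T) u E := by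
  by_cases hE : E.Monic ∧ ∀ Q ∈ insert P T, ¬ Q ∣ E
  · obtain ⟨hEm, hEP, hET⟩ : E.Monic ∧ ¬ P ∣ E ∧ ∀ Q ∈ T, ¬ Q ∣ E := by simpa using hE
    have hPE : ∀ Q ∈ T, ¬ Q ∣ P * E := by
      intro Q hQ hQPE
      rcases (hT Q hQ).2.prime.dvd_or_dvd hQPE with hQP | hQE
      · have : Q = P := eq_of_monic_of_associated (hT Q hQ).1 hPm
          ((hT Q hQ).2.associated_of_dvd hPi hQP)
        exact hPT (this ▸ hQ)
      · exact hET Q hQ hQE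
    rw [moebiusTerm, if_pos ⟨hPm.mul hEm, hPE⟩, moebiusTerm, if_pos hE,
      polyMoebius'_mul ((hPi.coprime_iff_not_dvd.2 hEP).isRelPrime),
      polyMoebius'_of_irreducible hPi, natDegree_mul hPm.ne_zero hEm.ne_zero, pow_add]
    push_cast
    ring
  · simp only [moebiusTerm, if_neg hE, mul_zero, ite_eq_right_iff]
    rintro ⟨hPEm, hPE⟩
    have hEm : E.Monic := hPm.of_mul_monic_left hPEm
    have hEP : P ∣ E := by
      by_contra hEP
      refine hE ⟨hEm, fun Q hQ hQE => ?_⟩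
      rcases Finset.mem_insert.1 hQ with rfl | hQT
      · exact hEP hQE
      · exact hPE Q hQT (hQE.mul_left P)
    obtain ⟨G, rfl⟩ := hEP
    rw [polyMoebius'_of_not_squarefree fun hsq => hPi.not_isUnit (hsq P ⟨G, by ring⟩)]
    simp

variable [Fintype F]

lemma summable_moebiusTerm {u : ℝ} (hu : Fintype.card F * |u| < 1)
    (T : Finset F[X]) : Summable (moebiusTerm T u) :=
  summable_of_abs_le_monic (abs_nonneg u) hu (abs_moebiusTerm_le T u)

lemma tsum_moebiusTerm_empty {u : ℝ} (hu : Fintype.card F * |u| < 1) :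
    ∑' D, moebiusTerm (∅ : Finset F[X]) u D = 1 - Fintype.card F * u := by
  have hsupp : ∀ D : F[X], ¬ D.Monic → moebiusTerm ∅ u D = 0 := fun D hD => if_neg fun h => hD h.1
  have hslice : ∀ n, ∑ D ∈ monicsOfDegree F n, moebiusTerm ∅ u D =
      (∑ D ∈ monicsOfDegree F n, polyMoebius' D : ℤ) * u ^ n := by
    intro n
    push_cast
    rw [Finset.sum_mul]
    refine Finset.sum_congr rfl fun D hD => ?_
    obtain ⟨hm, rfl⟩ := mem_monicsOfDegree.1 hD
    simp [moebiusTerm, hm]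
  rw [tsum_eq_tsum_sum_monicsOfDegree (summable_moebiusTerm hu ∅) hsupp, tsum_congr hslice,
    tsum_eq_sum (s := Finset.range 2)]
  · simp [Finset.sum_range_succ, sum_polyMoebius'_monicsOfDegree, sub_eq_add_neg]
  · intro n hn
    rw [Finset.mem_range, not_lt] at hn
    simp [sum_polyMoebius'_monicsOfDegree, show n ≠ 0 by omega, show n ≠ 1 by omega]

lemma tsum_moebiusTerm_eq_mul_tsum_insert {u : ℝ} (hu : Fintype.card F * |u| < 1)
    (hT : ∀ Q ∈ T, Q.Monic ∧ Irreducible Q) (hPm : P.Monic) (hPi : Irreducible P) (hPT : P ∉ T) :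
    ∑' D, moebiusTerm T u D = (1 - u ^ P.natDegree) * ∑' D, moebiusTerm (insert P T) u D := by
  set g : F[X] → ℝ := fun D => if P ∣ D then moebiusTerm T u D else 0
  have hsplit : ∀ D, moebiusTerm T u D = moebiusTerm (insert P T) u D + g D := by
    intro D
    by_cases hPD : P ∣ D
    · simp [g, hPD, moebiusTerm]
    · simp only [g, hPD, moebiusTerm, Finset.mem_insert, forall_eq_or_imp, not_false_eq_true,
        true_and, if_false, add_zero]
  have hg : Summable g :=
    ((summable_moebiusTerm hu T).sub (summable_moebiusTerm hu (insert P T))).congr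
      fun D => by rw [hsplit D, add_sub_cancel_left]
  have hrange : Function.support g ⊆ Set.range (P * ·) := by
    intro D hD
    by_contra hD'
    exact hD (if_neg fun ⟨E, hE⟩ => hD' ⟨E, hE.symm⟩)
  have hgP : ∀ E, g (P * E) = -u ^ P.natDegree * moebiusTerm (insert P T) u E := fun E => by
    simp only [g, dvd_mul_right, if_true, moebiusTerm_mul_left hT hPm hPi hPT]
  rw [tsum_congr hsplit, (summable_moebiusTerm hu _).tsum_add hg,
    ← (mul_right_injective₀ hPm.ne_zero).tsum_eq hrange, tsum_congr hgP, tsum_mul_left]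
  ring

lemma tsum_moebiusTerm_mul_prod {u : ℝ} (hu : Fintype.card F * |u| < 1)
    (hT : ∀ Q ∈ T, Q.Monic ∧ Irreducible Q) :
    (∑' D, moebiusTerm T u D) * ∏ P ∈ T, (1 - u ^ P.natDegree) = 1 - Fintype.card F * u := by
  induction T using Finset.induction_on with
  | empty => rw [Finset.prod_empty, mul_one, tsum_moebiusTerm_empty hu]
  | insert P T hPT ih =>
    have hT' : ∀ Q ∈ T, Q.Monic ∧ Irreducible Q := fun Q hQ => hT Q (Finset.mem_insert_of_mem hQ)
    obtain ⟨hPm, hPi⟩ := hT P (Finset.mem_insert_self P T)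
    rw [← ih hT', tsum_moebiusTerm_eq_mul_tsum_insert hu hT' hPm hPi hPT, Finset.prod_insert hPT]
    ring

lemma tsum_moebiusTerm_eq {u : ℝ} (hu : Fintype.card F * |u| < 1)
    (hT : ∀ Q ∈ T, Q.Monic ∧ Irreducible Q) :
    ∑' D, moebiusTerm T u D = (1 - Fintype.card F * u) * ∏ P ∈ T, (1 - u ^ P.natDegree)⁻¹ := by
  have hu1 : |u| < 1 := lt_of_le_of_lt
    (le_mul_of_one_le_left (abs_nonneg u) (Nat.one_le_cast.2 Fintype.card_pos)) hu
  have hfactor : ∀ P ∈ T, 1 - u ^ P.natDegree ≠ 0 := fun P hP => sub_ne_zero.2 fun h =>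
    (pow_lt_one₀ (abs_nonneg u) hu1 (hT P hP).2.natDegree_pos.ne').ne
      (by rw [← abs_pow, ← h, abs_one])
  rw [Finset.prod_inv_distrib, eq_mul_inv_iff_mul_eq₀ (Finset.prod_ne_zero_iff.2 hfactor),
    tsum_moebiusTerm_mul_prod hu hT]

end EulerFactors

section LinearFactors

variable {F ι : Type*} [Field F] [Fintype ι]

lemma monic_irreducible_of_mem_primeFactors_union_X_sub_C {U P : F[X]} (hU : U ≠ 0) (x : ι → F)
    (hP : P ∈ primeFactors U ∪ Finset.univ.image fun i => X - C (x i)) :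
    P.Monic ∧ Irreducible P := by
  rcases Finset.mem_union.1 hP with hP | hP
  · exact ((mem_primeFactors_iff hU).1 hP).imp_right And.left
  · obtain ⟨i, -, rfl⟩ := Finset.mem_image.1 hP
    exact ⟨monic_X_sub_C _, irreducible_X_sub_C _⟩

lemma isCoprime_and_eval_ne_zero_iff {U D : F[X]} (hU : U ≠ 0) (x : ι → F) :
    (IsCoprime D U ∧ ∀ i, D.eval (x i) ≠ 0) ↔
      ∀ P ∈ primeFactors U ∪ Finset.univ.image (fun i => X - C (x i)), ¬ P ∣ D := by
  simp [isCoprime_iff_forall_primeFactors_not_dvd hU, dvd_iff_isRoot, or_imp, forall_and]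

lemma disjoint_primeFactors_image_X_sub_C {U : F[X]} {x : ι → F} (hUx : ∀ i, U.eval (x i) ≠ 0) :
    Disjoint (primeFactors U) (Finset.univ.image fun i => X - C (x i)) := by
  refine Finset.disjoint_right.2 fun P hPL hPU => ?_
  obtain ⟨i, -, rfl⟩ := Finset.mem_image.1 hPL
  exact hUx i (dvd_iff_isRoot.1 (dvd_of_mem_normalizedFactors (mem_primeFactors.1 hPU)))

lemma prod_image_X_sub_C {M : Type*} [CommMonoid M] {x : ι → F} (hx : Function.Injective x)
    (f : ℕ → M) :
    ∏ P ∈ Finset.univ.image (fun i => X - C (x i)), f P.natDegree = f 1 ^ Fintype.card ι := by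
  rw [Finset.prod_image fun i _ j _ h => hx (C_injective (sub_right_injective h))]
  simp

end LinearFactors

theorem moebius_sum_at_two_general (F : Type*) [Field F] [Fintype F] (q ℓ : ℕ)
    (hq : Fintype.card F = q)
    (x : Fin ℓ → F) (hx : Function.Injective x)
    (U : Polynomial F) (hU : U ≠ 0) (hUx : ∀ i, U.eval (x i) ≠ 0) :
    ∑' D : {D : Polynomial F // D.Monic ∧ IsCoprime D U ∧
        ∀ i : Fin ℓ, D.eval (x i) ≠ 0},
      (polyMoebius' D.1 : ℝ) * (q : ℝ) ^ (-(2 * (D.1.natDegree : ℤ))) =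
      (1 - (q : ℝ)⁻¹) * ((1 - (q : ℝ) ^ (-2 : ℤ))⁻¹) ^ ℓ *
        ∏ᶠ P ∈ {P : Polynomial F | P.Monic ∧ Irreducible P ∧ P ∣ U},
          (1 - (q : ℝ) ^ (-(2 * (P.natDegree : ℤ))))⁻¹ := by
  subst hq
  set u : ℝ := (Fintype.card F : ℝ) ^ (-2 : ℤ)
  have hq1 : (1 : ℝ) < Fintype.card F := Nat.one_lt_cast.2 Fintype.one_lt_card
  have hu0 : 0 < u := by positivity
  have hqu : Fintype.card F * u = (Fintype.card F : ℝ)⁻¹ := by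
    simp only [u, zpow_neg, zpow_ofNat]
    field_simp
  have hpow : ∀ d : ℕ, (Fintype.card F : ℝ) ^ (-(2 * (d : ℤ))) = u ^ d := fun d => by
    rw [neg_mul_eq_neg_mul, zpow_mul, zpow_natCast]
  have hset : {P : F[X] | P.Monic ∧ Irreducible P ∧ P ∣ U} = ↑(primeFactors U) := by
    ext P
    simp [mem_primeFactors_iff hU]
  simp only [hpow, hset, finprod_mem_coe_finset]
  rw [tsum_subtype_eq_tsum_moebiusTerm (fun D => and_congr_right' <|
      isCoprime_and_eval_ne_zero_iff hU x),
    tsum_moebiusTerm_eq (by rw [abs_of_pos hu0, hqu]; exact inv_lt_one_of_one_lt₀ hq1)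
      fun P => monic_irreducible_of_mem_primeFactors_union_X_sub_C hU x,
    Finset.prod_union (disjoint_primeFactors_image_X_sub_C hUx),
    prod_image_X_sub_C hx fun d => (1 - u ^ d)⁻¹, Fintype.card_fin, pow_one, hqu]
  ring

/-- For distinct `x 1, …, x ℓ` in `F_q` (`ℓ ≤ q`) and `U` with `U(x i) ≠ 0` for
all `i`, the sum `∑ μ(D) q^(-2 deg D)` over monic `D` coprime to `U` with
`D(x i) ≠ 0` for all `i` equals
`(1 - q⁻¹)(1 - q⁻²)^(-ℓ) ∏_{P ∣ U} (1 - q^(-2 deg P))⁻¹`. -/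
theorem moebius_sum_at_two (F : Type*) [Field F] [Fintype F] (q ℓ : ℕ)
    (hq : Fintype.card F = q) (hℓq : ℓ ≤ q)
    (x : Fin ℓ → F) (hx : Function.Injective x)
    (U : Polynomial F) (hU : U ≠ 0) (hUx : ∀ i, U.eval (x i) ≠ 0) :
    ∑' D : {D : Polynomial F // D.Monic ∧ IsCoprime D U ∧
        ∀ i : Fin ℓ, D.eval (x i) ≠ 0},
      (polyMoebius' D.1 : ℝ) * (q : ℝ) ^ (-(2 * (D.1.natDegree : ℤ))) =
      (1 - (q : ℝ)⁻¹) * ((1 - (q : ℝ) ^ (-2 : ℤ))⁻¹) ^ ℓ *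
        ∏ᶠ P ∈ {P : Polynomial F | P.Monic ∧ Irreducible P ∧ P ∣ U},
          (1 - (q : ℝ) ^ (-(2 * (P.natDegree : ℤ))))⁻¹ :=
  moebius_sum_at_two_general F q ℓ hq x hx U hU hUx
end
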